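/- Let n be a positive integer and let a be a non-negative integer with a ≤ n. Then Σ_{k=a}^{n} q^{n−k}·[2k+1]·qbinom(2n+1, n−k) = [2n+1]·qbinom(2n, n−a). -/
import Mathlib


open Polynomial

/-- The Gaussian (`q`-)binomial coefficient `qbinom n k` as a polynomial in `q = X`
with integer coefficients; it is `0` for `k > n`. -/
noncomputable def qbinom : ℕ → ℕ → Polynomial ℤ
  | _, 0 => 1
  | 0, _ + 1 => 0
  | n + 1, k + 1 => qbinom n k + X ^ (k + 1) * qbinom n (k + 1)

/-- The `q`-integer `[n] = 1 + q + ⋯ + q^{n-1}` as a polynomial in `q = X`. -/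
noncomputable def qint (n : ℕ) : Polynomial ℤ := ∑ i ∈ Finset.range n, X ^ i

lemma qbinom_zero (n : ℕ) : qbinom n 0 = 1 := by cases n <;> rfl
lemma pascal (n k : ℕ) : qbinom (n+1) (k+1) = qbinom n k + X ^ (k + 1) * qbinom n (k + 1) := rfl
lemma qbinom_eq_zero : ∀ n k, n < k → qbinom n k = 0 := by
  intro n
  induction n with
  | zero => intro k hk; match k, hk with | k+1, _ => rfl
  | succ n ih =>
    intro k hk
    match k, hk with
    | k+1, hk => rw [pascal, ih k (by omega), ih (k+1) (by omega)]; ring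
lemma qint_succ (n : ℕ) : qint (n+1) = qint n + X ^ n := by
  simp [qint, Finset.sum_range_succ]
lemma qint_succ' (n : ℕ) : qint (n+1) = 1 + X * qint n := by
  simp [qint, Finset.sum_range_succ', Finset.mul_sum, pow_succ, mul_comm, add_comm]
lemma qint_mul (n : ℕ) : qint n * (X - 1) = X ^ n - 1 := by
  simpa [qint] using geom_sum_mul (X : Polynomial ℤ) n
lemma qbinom_one : ∀ n, qbinom n 1 = qint n := by
  intro n
  induction n with
  | zero => simp [qint]; rfl
  | succ n ih => rw [pascal, qbinom_zero, ih, qint_succ']; ring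

lemma pascal' : ∀ n k, qbinom (n+1) (k+1) = X ^ (n - k) * qbinom n k + qbinom n (k+1) := by
  intro n
  induction n with
  | zero =>
    intro k
    cases k with
    | zero => simp [pascal, qbinom_zero, qbinom_eq_zero 0 1 (by omega)]
    | succ j =>
      rw [pascal, qbinom_eq_zero 0 (j+1) (by omega), qbinom_eq_zero 0 (j+2) (by omega)]
      ring
  | succ n ih =>
    intro k
    cases k with
    | zero =>
      rw [pascal, qbinom_zero]
      simp only [zero_add, Nat.sub_zero, qbinom_one]
      have h1 := qint_succ (n+1)
      have h2 := qint_succ' (n+1)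
      linear_combination h1 - h2
    | succ j =>
      rcases le_or_gt n j with hj | hj
      · have e0 : n + 1 - (j+1) = 0 := by omega
        rw [pascal, e0, qbinom_eq_zero (n+1) (j+2) (by omega)]
        ring
      · obtain ⟨m, rfl⟩ : ∃ m, n = j + 1 + m := ⟨n - j - 1, by omega⟩
        have h2 := ih j
        have h3 := ih (j + 1)
        rw [show j + 1 + m - j = m + 1 from by omega] at h2
        rw [show j + 1 + m - (j + 1) = m from by omega] at h3
        rw [show j + 1 + m + 1 - (j + 1) = m + 1 from by omega]
        rw [show j + 1 + m = j + m + 1 from by omega] at h2 h3 ⊢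
        have h1 := pascal (j + m + 2) (j + 1)
        have h4 := pascal (j + m + 1) j
        have h5 := pascal (j + m + 1) (j + 1)
        linear_combination h1 + h2 - X^(m+1)*h4 + X^(j+2)*h3 - h5

/-- `(1 - X^(n-k)) * C(n+1, k+1) = (1 - X^(n+1)) * C(n, k+1)` -/
lemma M2 (n k : ℕ) :
    (1 - X ^ (n - k)) * qbinom (n+1) (k+1) = (1 - X ^ (n+1)) * qbinom n (k+1) := by
  rcases le_or_gt n k with hk | hk
  · rw [Nat.sub_eq_zero_of_le hk, qbinom_eq_zero n (k+1) (by omega)]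
    ring
  · obtain ⟨m, rfl⟩ : ∃ m, n = k + 1 + m := ⟨n - k - 1, by omega⟩
    have h2 := pascal' (k + 1 + m) k
    rw [show k + 1 + m - k = m + 1 from by omega] at h2
    have h4 := pascal (k + 1 + m) k
    rw [show k + 1 + m = k + m + 1 from by omega] at h2 h4 ⊢
    rw [show k + m + 1 - k = m + 1 from by omega]
    linear_combination h2 - X^(m+1) * h4

/-- `(1 - X^(k+1)) * C(n+1, k+1) = (1 - X^(n+1)) * C(n, k)` -/
lemma M : ∀ n k, (1 - X ^ (k+1)) * qbinom (n+1) (k+1) = (1 - X ^ (n+1)) * qbinom n k := by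
  intro n
  induction n with
  | zero =>
    intro k
    cases k with
    | zero =>
      simp [qbinom_zero, qbinom_one, qint_succ', show qint 0 = 0 from by simp [qint]]
    | succ j =>
      rw [qbinom_eq_zero 1 (j+2) (by omega), qbinom_eq_zero 0 (j+1) (by omega)]
      ring
  | succ n ih =>
    intro k
    cases k with
    | zero =>
      rw [qbinom_one, qbinom_zero, mul_one]
      have := qint_mul (n+2)
      linear_combination -this
    | succ j =>
      rcases le_or_gt j n with hj | hj
      · have hp := pascal (n+1) (j+1)
        have h3 := ih (j+1)
        have hM2 := M2 n j
        obtain ⟨m, rfl⟩ : ∃ m, n = j + m := ⟨n - j, by omega⟩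
        rw [show j + m - j = m from by omega] at hM2
        linear_combination (1 - X^(j+2)) * hp + X^(j+2) * h3 - X^(j+2) * hM2
      · rw [qbinom_eq_zero (n+2) (j+2) (by omega), qbinom_eq_zero (n+1) (j+1) (by omega)]
        ring

lemma Xsub_ne : (X - 1 : Polynomial ℤ) ≠ 0 := by
  intro h
  have := congrArg (Polynomial.eval 0) h
  simp at this

/-- key recursion step -/
lemma key (a d : ℕ) :
    qint (2*(a+d+1)+1) * qbinom (2*(a+d+1)) (d+1) =
      qint (2*(a+d+1)+1) * qbinom (2*(a+d+1)) d
        + X^(d+1) * qint (2*a+1) * qbinom (2*(a+d+1)+1) (d+1) := by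
  have hN : 2*(a+d+1) = 2*a+2*d+1 + 1 := by ring
  rw [hN]
  set N : ℕ := 2*a+2*d+1 with hNdef
  -- N+1 = 2(a+d+1), N+2 = 2(a+d+1)+1
  have hq := qint_mul (N+2)
  have hqa := qint_mul (2*a+1)
  have hM := M (N+1) d
  have hM2 := M2 (N+1) d
  rw [show N + 1 - d = 2*a + d + 2 from by omega] at hM2
  refine mul_right_cancel₀ Xsub_ne ?_
  linear_combination (qbinom (N+1) (d+1) - qbinom (N+1) d) * hq
    - X^(d+1) * qbinom (N+2) (d+1) * hqa + hM2 - hM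

lemma main_aux : ∀ d a,
    ∑ k ∈ Finset.Icc a (a+d), X ^ ((a+d) - k) * qint (2 * k + 1) * qbinom (2 * (a+d) + 1) ((a+d) - k)
      = qint (2 * (a+d) + 1) * qbinom (2 * (a+d)) d := by
  intro d
  induction d with
  | zero =>
    intro a
    simp [qbinom_zero]
  | succ d ih =>
    intro a
    have hsplit : Finset.Icc a (a+d+1) = insert a (Finset.Icc (a+1) (a+d+1)) := by
      rw [Finset.Icc_add_one_left_eq_Ioc, Finset.Ioc_insert_left (by omega)]
    rw [show a + (d+1) = a + d + 1 from by omega]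
    rw [hsplit, Finset.sum_insert (by simp)]
    have ih' := ih (a+1)
    rw [show a + 1 + d = a + d + 1 from by omega] at ih'
    rw [ih', show a + d + 1 - a = d + 1 from by omega]
    linear_combination -key a d


/-- `∑_{k=a}^{n} q^{n-k}·[2k+1]·qbinom(2n+1, n-k) = [2n+1]·qbinom(2n, n-a)`. -/
theorem stmt19 (n a : ℕ) (hn : 0 < n) (ha : a ≤ n) :
    ∑ k ∈ Finset.Icc a n, X ^ (n - k) * qint (2 * k + 1) * qbinom (2 * n + 1) (n - k) =
      qint (2 * n + 1) * qbinom (2 * n) (n - a) := by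
  obtain ⟨d, rfl⟩ : ∃ d, n = a + d := ⟨n - a, by omega⟩
  rw [show a + d - a = d from by omega]
  exact main_aux d a
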